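/- In the semantic forcing property: if p ∈ P and @_k ⟨a₁;a₂⟩k'' ∈ p, then there exists a fresh nominal constant k' ∈ C such that p ∪ {@_k ⟨a₁⟩k', @_{k'} ⟨a₂⟩k''} ∈ P. -/

import Mathlib

/-!
Forcing in hybrid-dynamic first-order logic with rigid symbols (Găină–Badia–Kowalski).
We work with an abstract fragment: `Nom` is the set of nominals, `Mo` the set of
(base) modalities, `Atom` the set of (extended) atomic sentences of the underlying
first-order layer (equations and relational atoms), and `Subst` the set of ground
substitutions used to interpret existential quantification.
-/

namespace HDFOLR

open Cardinal

/-- Structured actions over a set `Mo` of base modalities. -/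
inductive Act (Mo : Type) : Type where
  | base : Mo → Act Mo
  | comp : Act Mo → Act Mo → Act Mo
  | union : Act Mo → Act Mo → Act Mo
  | star : Act Mo → Act Mo

/-- `a.pow n` is the `(n+1)`-fold sequential composition `a ⨟ ⋯ ⨟ a`. -/
def Act.pow {Mo : Type} (a : Act Mo) : ℕ → Act Mo
  | 0 => a
  | n + 1 => Act.comp a (a.pow n)

/-- Sentences of (a fragment of) hybrid-dynamic first-order logic with rigid symbols:
atoms, nominal sentences, possibility over structured actions, negation, finite
disjunction, retrieve `@_k`, and existential quantification (rendered by its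
ground instances, i.e. substitutions `θ : X → ∅`). -/
inductive Sen (Nom Mo Atom Subst : Type) : Type where
  | atom : Atom → Sen Nom Mo Atom Subst
  | nom : Nom → Sen Nom Mo Atom Subst
  | pos : Act Mo → Sen Nom Mo Atom Subst → Sen Nom Mo Atom Subst
  | neg : Sen Nom Mo Atom Subst → Sen Nom Mo Atom Subst
  | disj : (n : ℕ) → (Fin n → Sen Nom Mo Atom Subst) → Sen Nom Mo Atom Subst
  | ret : Nom → Sen Nom Mo Atom Subst → Sen Nom Mo Atom Subst
  | ex : (Subst → Sen Nom Mo Atom Subst) → Sen Nom Mo Atom Subst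

variable {Nom Mo Atom Subst : Type}

/-- Extended atomic sentences: atoms, nominals, and nominal relations `⟨λ⟩k'`. -/
def Sen.ExtAtomic : Sen Nom Mo Atom Subst → Prop
  | .atom _ => True
  | .nom _ => True
  | .pos (.base _) (.nom _) => True
  | _ => False

/-- Basic sentences: extended atomic sentences with retrieve applied at most once. -/
def Sen.Basic : Sen Nom Mo Atom Subst → Prop
  | .ret _ γ => γ.ExtAtomic
  | γ => γ.ExtAtomic

/-- `Reach f p k a k'`: the condition `p` forces `⟨a⟩k'` at `k`
(clauses (2)–(4) of the definition of the forcing relation, together with the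
atomic clause for nominal relations). -/
inductive Reach {P : Type} (f : P → Set (Sen Nom Mo Atom Subst)) :
    P → Nom → Act Mo → Nom → Prop where
  | base {p k m k'} :
      Sen.ret k (Sen.pos (Act.base m) (Sen.nom k')) ∈ f p → Reach f p k (Act.base m) k'
  | comp {p k k' k'' a₁ a₂} :
      Reach f p k a₁ k' → Reach f p k' a₂ k'' → Reach f p k (Act.comp a₁ a₂) k''
  | unionL {p k k'' a₁ a₂} : Reach f p k a₁ k'' → Reach f p k (Act.union a₁ a₂) k''
  | unionR {p k k'' a₁ a₂} : Reach f p k a₂ k'' → Reach f p k (Act.union a₁ a₂) k''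
  | star {p k k'' a} (n : ℕ) : Reach f p k (a.pow n) k'' → Reach f p k (Act.star a) k''

/-- The forcing relation `p ⊩^k γ` induced by `f : P → 𝒫(Sen_b(Δ))`. -/
def Forces {P : Type} [LE P] (f : P → Set (Sen Nom Mo Atom Subst)) :
    Sen Nom Mo Atom Subst → P → Nom → Prop
  | .atom a, p, k => Sen.ret k (Sen.atom a) ∈ f p
  | .nom k', p, k => Sen.ret k (Sen.nom k') ∈ f p
  | .pos a (.nom k''), p, k => Reach f p k a k''
  | .pos a γ, p, k => ∃ k', Reach f p k a k' ∧ Forces f γ p k'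
  | .neg γ, p, k => ∀ q, p ≤ q → ¬ Forces f γ q k
  | .disj _ g, p, k => ∃ i, Forces f (g i) p k
  | .ret k' γ, p, _ => Forces f γ p k'
  | .ex g, p, k => ∃ θ, Forces f (g θ) p k


/-- Kripke structures over the signature `(Nom, Mo, Atom)`: a nonempty set of worlds,
interpretations of nominals as worlds, of modalities as accessibility relations,
and of the first-order atoms as local truth at each world. -/
structure KModel (Nom Mo Atom : Type) : Type 1 where
  Wo : Type
  ne : Nonempty Wo
  nomI : Nom → Wo
  modI : Mo → Wo → Wo → Prop
  atomI : Atom → Wo → Prop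

variable {Nom Mo Atom Subst : Type}

/-- Accessibility relation interpreting structured actions. -/
def KModel.acc (M : KModel Nom Mo Atom) : Act Mo → M.Wo → M.Wo → Prop
  | .base m => M.modI m
  | .comp a b => Relation.Comp (M.acc a) (M.acc b)
  | .union a b => fun w w' => M.acc a w w' ∨ M.acc b w w'
  | .star a => Relation.ReflTransGen (M.acc a)

/-- Local satisfaction `(W,M) ⊨^w γ`. -/
def KModel.locSat (M : KModel Nom Mo Atom) : Sen Nom Mo Atom Subst → M.Wo → Prop
  | .atom a, w => M.atomI a w
  | .nom k, w => M.nomI k = w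
  | .pos a γ, w => ∃ w', M.acc a w w' ∧ M.locSat γ w'
  | .neg γ, w => ¬ M.locSat γ w
  | .disj _ g, w => ∃ i, M.locSat (g i) w
  | .ret k γ, _ => M.locSat γ (M.nomI k)
  | .ex g, w => ∃ θ, M.locSat (g θ) w

/-- Global satisfaction `(W,M) ⊨ γ`. -/
def KModel.gSat (M : KModel Nom Mo Atom) (γ : Sen Nom Mo Atom Subst) : Prop :=
  ∀ w, M.locSat γ w

/-- `(W,M) ⊨ T` for a set of sentences. -/
def KModel.satSet (M : KModel Nom Mo Atom) (T : Set (Sen Nom Mo Atom Subst)) : Prop :=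
  ∀ γ ∈ T, M.gSat γ

/-- Global semantic entailment `T ⊨ γ`. -/
def entails (T : Set (Sen Nom Mo Atom Subst)) (γ : Sen Nom Mo Atom Subst) : Prop :=
  ∀ M : KModel Nom Mo Atom, M.satSet T → M.gSat γ

/-- A forcing property `⟨P, ≤, f⟩` over the signature `(Nom, Mo, Atom, Subst)`. -/
structure ForcingProperty (P Nom Mo Atom Subst : Type) [PartialOrder P] [OrderBot P] where
  f : P → Set (Sen Nom Mo Atom Subst)
  basic : ∀ p, ∀ γ ∈ f p, γ.Basic
  mono : ∀ ⦃p q : P⦄, p ≤ q → f p ⊆ f q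
  decide : ∀ (p : P) (k : Nom) (γ : Sen Nom Mo Atom Subst), γ.ExtAtomic →
      entails (f p) (Sen.ret k γ) → ∃ q, p ≤ q ∧ Sen.ret k γ ∈ f q

universe u

variable {C : Type}

/-- Reduct of a Kripke structure over `Δ[C]` (extra nominal constants `C`) to `Δ`. -/
def KModel.reduct (M : KModel (Nom ⊕ C) Mo Atom) : KModel Nom Mo Atom where
  Wo := M.Wo
  ne := M.ne
  nomI := fun k => M.nomI (Sum.inl k)
  modI := M.modI
  atomI := M.atomI

/-- Conditions of the semantic forcing property over `Δ[C]` relative to the class `K`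
of Kripke structures over `Δ`: sets of `Δ[C]`-sentences of cardinality `< α`
satisfiable in a Kripke structure over `Δ[C]` whose `Δ`-reduct lies in `K`. -/
def SemP (K : Set (KModel Nom Mo Atom)) (α : Cardinal) :
    Set (Set (Sen (Nom ⊕ C) Mo Atom Subst)) :=
  {p | #↥p < α ∧
    ∃ M : KModel (Nom ⊕ C) Mo Atom, (∀ γ ∈ p, M.gSat γ) ∧ M.reduct ∈ K}



/-!
Take a model `M` of `p` and a world `w` witnessing `@_k ⟨a₁⨟a₂⟩k''`, i.e. an
`a₁`-successor of `k` from which `k''` is `a₂`-reachable. Since `#Subst < #Sen ≤ α`,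
every sentence mentions fewer than `α` nominals (only finitely many when `α = ℵ₀`),
so `p` mentions fewer than `α = #C` of the new constants and some `c ∈ C` is fresh.
Reinterpreting `c` as `w` changes neither the truth of `p` nor the `Δ`-reduct, and
makes both new sentences true.
-/

theorem mk_insert_lt {β : Type} {α : Cardinal} (hα : ℵ₀ ≤ α) {s : Set β} (hs : #s < α)
    (b : β) : #(insert b s : Set β) < α :=
  mk_insert_le.trans_lt (add_lt_of_lt hα hs (one_lt_aleph0.trans_le hα))

section Nominals

def Sen.noms : Sen Nom Mo Atom Subst → Set Nom
  | .atom _ => ∅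
  | .nom k => {k}
  | .pos _ γ => γ.noms
  | .neg γ => γ.noms
  | .disj _ g => ⋃ i, (g i).noms
  | .ret k γ => insert k γ.noms
  | .ex g => ⋃ θ, (g θ).noms

theorem Sen.noms_finite [Finite Subst] (γ : Sen Nom Mo Atom Subst) : γ.noms.Finite := by
  induction γ with
  | atom => exact Set.finite_empty
  | nom k => exact Set.finite_singleton k
  | pos _ _ ih | neg _ ih => exact ih
  | disj _ _ ih | ex _ ih => exact Set.finite_iUnion ih
  | ret k _ ih => exact ih.insert k

theorem Sen.mk_noms_le (γ : Sen Nom Mo Atom Subst) : #γ.noms ≤ ℵ₀ ⊔ #Subst := by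
  have hβ : ℵ₀ ≤ ℵ₀ ⊔ #Subst := le_sup_left
  induction γ with
  | atom => simp [Sen.noms]
  | nom k => simp [Sen.noms]
  | pos _ _ ih | neg _ ih => exact ih
  | disj n g ih =>
    calc #(⋃ i, (g i).noms) ≤ #(Fin n) * ⨆ i, #(g i).noms := mk_iUnion_le _
      _ ≤ (ℵ₀ ⊔ #Subst) * (ℵ₀ ⊔ #Subst) :=
        mul_le_mul' ((lt_aleph0_of_finite _).le.trans hβ) (ciSup_le' ih)
      _ = ℵ₀ ⊔ #Subst := mul_eq_self hβ
  | ret k γ ih =>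
    calc #(insert k γ.noms : Set Nom) ≤ #γ.noms + 1 := mk_insert_le
      _ ≤ (ℵ₀ ⊔ #Subst) + (ℵ₀ ⊔ #Subst) := add_le_add ih (one_le_aleph0.trans hβ)
      _ = ℵ₀ ⊔ #Subst := add_eq_self hβ
  | ex g ih =>
    calc #(⋃ θ, (g θ).noms) ≤ #Subst * ⨆ θ, #(g θ).noms := mk_iUnion_le _
      _ ≤ (ℵ₀ ⊔ #Subst) * (ℵ₀ ⊔ #Subst) := mul_le_mul' le_sup_right (ciSup_le' ih)
      _ = ℵ₀ ⊔ #Subst := mul_eq_self hβ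

theorem mk_subst_lt_mk_sen : #Subst < #(Sen Nom Mo Atom Subst) := by
  have two_le : (2 : Cardinal) ≤ #(Sen Nom Mo Atom Subst) :=
    two_le_iff.mpr ⟨.disj 0 Fin.elim0, .neg (.disj 0 Fin.elim0), by simp⟩
  calc #Subst < 2 ^ #Subst := cantor _
    _ ≤ #(Sen Nom Mo Atom Subst) ^ #Subst := power_le_power_right two_le
    _ = #(Subst → Sen Nom Mo Atom Subst) := (power_def _ _).symm
    _ ≤ #(Sen Nom Mo Atom Subst) := mk_le_of_injective fun _ _ h => Sen.ex.inj h

theorem mk_biUnion_noms_lt {α : Cardinal} (hα : ℵ₀ ≤ α) (hSubst : #Subst < α)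
    {p : Set (Sen Nom Mo Atom Subst)} (hp : #p < α) : #(⋃ γ ∈ p, γ.noms) < α := by
  rcases hα.lt_or_eq with hα' | rfl
  · calc #(⋃ γ ∈ p, γ.noms) ≤ #p * ⨆ γ : p, #(γ : Sen Nom Mo Atom Subst).noms :=
          mk_biUnion_le _ _
      _ ≤ #p * (ℵ₀ ⊔ #Subst) := mul_le_mul' le_rfl (ciSup_le' fun γ => γ.1.mk_noms_le)
      _ < α := mul_lt_of_lt hα hp (max_lt hα' hSubst)
  · have : Finite Subst := lt_aleph0_iff_finite.mp hSubst
    have hp_fin : p.Finite := lt_aleph0_iff_set_finite.mp hp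
    exact (hp_fin.biUnion fun γ _ => γ.noms_finite).lt_aleph0

end Nominals

section Models

variable (M : KModel Nom Mo Atom)

theorem KModel.locSat_ret_pos_nom (k k' : Nom) (a : Act Mo) (w : M.Wo) :
    M.locSat (Sen.ret k (Sen.pos a (Sen.nom k')) : Sen Nom Mo Atom Subst) w ↔
      M.acc a (M.nomI k) (M.nomI k') := by
  simp only [KModel.locSat, exists_eq_right']

def KModel.updateNom [DecidableEq Nom] (n : Nom) (w : M.Wo) : KModel Nom Mo Atom :=
  { M with nomI := Function.update M.nomI n w }

variable [DecidableEq Nom] (n : Nom) (w : M.Wo)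

@[simp]
theorem KModel.updateNom_nomI : (M.updateNom n w).nomI = Function.update M.nomI n w := rfl

@[simp]
theorem KModel.acc_updateNom (a : Act Mo) : (M.updateNom n w).acc a = M.acc a := by
  induction a with
  | base => rfl
  | comp _ _ ih₁ ih₂ => exact congrArg₂ Relation.Comp ih₁ ih₂
  | union _ _ ih₁ ih₂ => simp only [KModel.acc, ih₁, ih₂]; rfl
  | star _ ih => exact congrArg Relation.ReflTransGen ih

theorem KModel.locSat_updateNom {γ : Sen Nom Mo Atom Subst} (hn : n ∉ γ.noms) (v : M.Wo) :
    (M.updateNom n w).locSat γ v ↔ M.locSat γ v := by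
  induction γ generalizing v with
  | atom => rfl
  | nom k =>
    have : k ≠ n := Ne.symm hn
    simp [KModel.locSat, KModel.updateNom, this]
  | pos a γ ih => exact exists_congr fun v' => and_congr (by rw [acc_updateNom]) (ih hn v')
  | neg γ ih => simp only [KModel.locSat, ih hn]
  | disj _ g ih =>
    simp only [Sen.noms, Set.mem_iUnion, not_exists] at hn
    simp only [KModel.locSat, ih _ (hn _)]
  | ret k γ ih =>
    simp only [Sen.noms, Set.mem_insert_iff, not_or] at hn
    simpa [KModel.locSat, KModel.updateNom, Ne.symm hn.1] using ih hn.2 _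
  | ex g ih =>
    simp only [Sen.noms, Set.mem_iUnion, not_exists] at hn
    simp only [KModel.locSat, ih _ (hn _)]

end Models

theorem KModel.reduct_updateNom_inr [DecidableEq Nom] [DecidableEq C]
    (M : KModel (Nom ⊕ C) Mo Atom) (c : C) (w : M.Wo) :
    (M.updateNom (Sum.inr c) w).reduct = M.reduct := by
  simp [KModel.reduct, KModel.updateNom]

/-- If `p` is a condition of the semantic forcing property and `@_k ⟨a₁⨟a₂⟩k'' ∈ p`,
then `p ∪ {@_k ⟨a₁⟩k', @_{k'} ⟨a₂⟩k''} ∈ P` for some new nominal constant `k' ∈ C`. -/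
theorem semP_comp (K : Set (KModel Nom Mo Atom)) (α : Cardinal)
    (hα : Cardinal.aleph0 ≤ α) (hC : #C = α)
    (hpow : #(Sen Nom Mo Atom Subst) ≤ α)
    (p : Set (Sen (Nom ⊕ C) Mo Atom Subst))
    (hp : p ∈ SemP (C := C) (Subst := Subst) K α)
    (k k'' : Nom ⊕ C) (a₁ a₂ : Act Mo)
    (hmem : Sen.ret k (Sen.pos (Act.comp a₁ a₂) (Sen.nom k'')) ∈ p) :
    ∃ k' : C,
      insert (Sen.ret k (Sen.pos a₁ (Sen.nom (Sum.inr k'))))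
        (insert (Sen.ret (Sum.inr k') (Sen.pos a₂ (Sen.nom k''))) p)
        ∈ SemP (C := C) (Subst := Subst) K α := by
  classical
  obtain ⟨hcard, M, hMsat, hMred⟩ := hp
  have hnoms : #(Sum.inr ⁻¹' ⋃ γ ∈ p, γ.noms) < #C :=
    hC ▸ (mk_preimage_of_injective _ _ Sum.inr_injective).trans_lt
      (mk_biUnion_noms_lt hα (mk_subst_lt_mk_sen.trans_le hpow) hcard)
  obtain ⟨c, hc⟩ := compl_nonempty_of_mk_lt_mk hnoms
  simp only [Set.mem_compl_iff, Set.mem_preimage, Set.mem_iUnion, not_exists] at hc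
  obtain ⟨w, h₁, h₂⟩ :=
    (M.locSat_ret_pos_nom k k'' _ (Classical.choice M.ne)).mp (hMsat _ hmem _)
  have hk : k ≠ Sum.inr c := fun h => hc _ hmem (by simp [Sen.noms, h])
  have hk'' : k'' ≠ Sum.inr c := fun h => hc _ hmem (by simp [Sen.noms, h])
  refine ⟨c, mk_insert_lt hα (mk_insert_lt hα hcard _) _, M.updateNom (Sum.inr c) w,
    ?_, by rwa [KModel.reduct_updateNom_inr]⟩
  rintro γ (rfl | rfl | hγ) v
  · rwa [KModel.locSat_ret_pos_nom, KModel.acc_updateNom, KModel.updateNom_nomI,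
      Function.update_of_ne hk, Function.update_self]
  · rwa [KModel.locSat_ret_pos_nom, KModel.acc_updateNom, KModel.updateNom_nomI,
      Function.update_of_ne hk'', Function.update_self]
  · exact (M.locSat_updateNom _ w (hc γ hγ) v).mpr (hMsat γ hγ v)

end HDFOLR
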